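/- arXiv:1108.4817 — 3 statements merged into one kernel-verified Lean document; each statement's English description precedes it below -/
import Mathlib

section
/- Let T be a finite set of k ≥ 1 collinear points in ℝ^d and r : T → (0,∞). Then the number of ordered pairs (x,y) with x,y ∈ T, x ≠ y, and dist(x,y) = r(x) is at most 2k − 2. -/
/-!
Projecting the line onto `ℝ` turns distances into differences of coordinates. Every `x` then
reaches at most one point on its left (at coordinate `f x - r x`) and at most one on its right,
and the leftmost point reaches nothing on its left, the rightmost nothing on its right.
-/

open Finset

theorem Collinear.exists_dist_eq_abs_sub {V P : Type*} [NormedAddCommGroup V] [NormedSpace ℝ V]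
    [MetricSpace P] [NormedAddTorsor V P] {s : Set P} (h : Collinear ℝ s) :
    ∃ f : P → ℝ, ∀ x ∈ s, ∀ y ∈ s, dist x y = |f x - f y| := by
  obtain ⟨p₀, v, hv⟩ := (collinear_iff_exists_forall_eq_smul_vadd s).mp h
  choose t ht using fun p => (em (p ∈ s)).elim (fun hp => (hv p hp).imp fun _ h _ => h)
    fun hp => ⟨0, fun h => absurd h hp⟩
  refine ⟨fun p => t p * ‖v‖, fun x hx y hy => ?_⟩
  conv_lhs => rw [ht x hx, ht y hy]
  rw [dist_vadd_cancel_right, dist_eq_norm, ← sub_smul, norm_smul,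
    Real.norm_eq_abs, ← sub_mul, abs_mul, abs_norm]

noncomputable def leftPairs {α : Type*} (f r : α → ℝ) (T : Finset α) : Finset (α × α) :=
  (T ×ˢ T).filter fun q => f q.2 < f q.1 ∧ f q.1 - f q.2 = r q.1

@[simp]
theorem mem_leftPairs {α : Type*} {f r : α → ℝ} {T : Finset α} {q : α × α} :
    q ∈ leftPairs f r T ↔ (q.1 ∈ T ∧ q.2 ∈ T) ∧ f q.2 < f q.1 ∧ f q.1 - f q.2 = r q.1 := by
  simp [leftPairs]

theorem card_leftPairs_le {α : Type*} {f : α → ℝ} {T : Finset α} (hf : Set.InjOn f T)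
    (r : α → ℝ) : (leftPairs f r T).card ≤ T.card - 1 := by
  classical
  rcases T.eq_empty_or_nonempty with rfl | hne
  · simp [leftPairs]
  obtain ⟨m, hm, hmin⟩ := T.exists_min_image f hne
  rw [← card_erase_of_mem hm]
  refine card_le_card_of_injOn Prod.fst (fun q hq => ?_) fun q hq q' hq' hfst => ?_
  all_goals rw [mem_coe, mem_leftPairs] at hq
  · obtain ⟨⟨hq₁, hq₂⟩, hlt, -⟩ := hq
    exact mem_erase.mpr ⟨fun h => (hmin q.2 hq₂).not_gt (h ▸ hlt), hq₁⟩
  · obtain ⟨⟨-, hq₂⟩, -, hq⟩ := hq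
    rw [mem_coe, mem_leftPairs] at hq'
    obtain ⟨⟨-, hq'₂⟩, -, hq'⟩ := hq'
    have hfst : q.1 = q'.1 := hfst
    refine Prod.ext hfst (hf hq₂ hq'₂ ?_)
    rw [hfst] at hq
    linarith

theorem stmt_4_general (d : ℕ) (T : Finset (EuclideanSpace ℝ (Fin d)))
    (hcol : Collinear ℝ (T : Set (EuclideanSpace ℝ (Fin d))))
    (r : EuclideanSpace ℝ (Fin d) → ℝ) :
    (T.offDiag.filter fun q => dist q.1 q.2 = r q.1).card ≤ 2 * T.card - 2 := by
  classical
  obtain ⟨f, hf⟩ := hcol.exists_dist_eq_abs_sub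
  have hinj : Set.InjOn f T := fun x hx y hy h =>
    dist_eq_zero.mp (by rw [hf x hx y hy, h, sub_self, abs_zero])
  have hsplit : (T.offDiag.filter fun q => dist q.1 q.2 = r q.1) ⊆
      leftPairs f r T ∪ leftPairs (-f) r T := by
    intro q hq
    simp only [mem_filter, mem_offDiag] at hq
    obtain ⟨⟨hx, hy, hne⟩, hdist⟩ := hq
    have hfne : f q.1 ≠ f q.2 := fun h => hne (hinj hx hy h)
    rw [hf _ hx _ hy] at hdist
    simp only [mem_union, mem_leftPairs, Pi.neg_apply]
    rcases hfne.lt_or_gt with h | h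
    · exact .inr ⟨⟨hx, hy⟩, by linarith, by rw [abs_of_neg (by linarith)] at hdist; linarith⟩
    · exact .inl ⟨⟨hx, hy⟩, h, by rwa [abs_of_pos (by linarith)] at hdist⟩
  calc _ ≤ (leftPairs f r T).card + (leftPairs (-f) r T).card :=
        (card_le_card hsplit).trans (card_union_le _ _)
    _ ≤ (T.card - 1) + (T.card - 1) :=
        add_le_add (card_leftPairs_le hinj r)
          (card_leftPairs_le (fun x hx y hy h => hinj hx hy (neg_inj.mp h)) r)
    _ = 2 * T.card - 2 := by omega

open scoped Classical in
/-- For a nonempty finite set `T` of `k` collinear points in `ℝ^d` and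
`r : T → (0,∞)`, the number of ordered pairs `(x,y)`, `x ≠ y ∈ T`, with
`dist x y = r x` is at most `2k - 2`. -/
theorem stmt_4 (d : ℕ) (T : Finset (EuclideanSpace ℝ (Fin d)))
    (hcol : Collinear ℝ (T : Set (EuclideanSpace ℝ (Fin d))))
    (r : EuclideanSpace ℝ (Fin d) → ℝ) (hr : ∀ x ∈ T, 0 < r x)
    (hk : 1 ≤ T.card) :
    (T.offDiag.filter fun q => dist q.1 q.2 = r q.1).card ≤ 2 * T.card - 2 :=
  stmt_4_general d T hcol r
end

section
/- Let t_p(n) denote the number of edges of the Turán graph (complete p-partite graph on n vertices with parts as equal as possible). Then for all integers n > k ≥ 1 and p ≥ 1, t_p(n) − t_p(n−k) ≥ (1 − 1/p) · k · (n−k). -/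
/-!
Adding a vertex to the Turán graph `T_p(n)` joins it to every earlier vertex outside its own
class, of which there are `n - ⌊n/p⌋ ≥ (1 - 1/p) n`. Hence `t_p(m + k) - t_p(m)` is a sum of
`k` such increments, each at least `(1 - 1/p) m`.
-/

open scoped Classical in
/-- `t p n`: the number of edges of the Turán graph (complete `p`-partite
graph on `n` vertices with parts as equal as possible). -/
noncomputable def turanEdges (p n : ℕ) : ℕ := (SimpleGraph.turanGraph n p).edgeFinset.card

open Finset SimpleGraph

lemma Fin.card_filter_univ_eq_count (m : ℕ) (P : ℕ → Prop) [DecidablePred P] :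
    #{w : Fin m | P w} = Nat.count P m := by
  rw [Nat.count_eq_card_filter_range, card_filter, card_filter,
    Fin.sum_univ_eq_sum_range (fun j => if P j then 1 else 0)]

lemma Nat.count_modEq_self (n p : ℕ) : Nat.count (· ≡ n [MOD p]) n = n / p := by
  rcases p.eq_zero_or_pos with rfl | hp
  · simpa [Nat.ModEq, Nat.count_iff_forall_not] using fun m hm => hm.ne
  · simpa using Nat.count_modEq_card n hp n

lemma degree_turanGraph_add_count {n p : ℕ} (v : Fin n) :
    (turanGraph n p).degree v + Nat.count (· ≡ v [MOD p]) n = n := by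
  classical
  rw [← card_neighborFinset_eq_degree, neighborFinset_eq_filter, ← Fin.card_filter_univ_eq_count,
    add_comm]
  simp only [turanGraph_adj, ne_comm (a := (v : ℕ) % p)]
  exact (card_filter_add_card_filter_not _).trans (card_fin n)

lemma degree_turanGraph_last (n p : ℕ) :
    (turanGraph (n + 1) p).degree (Fin.last n) = n - n / p := by
  have h := degree_turanGraph_add_count (p := p) (Fin.last n)
  rw [Fin.val_last, Nat.count_succ, Nat.count_modEq_self] at h
  simp only [Nat.ModEq.refl, if_true] at h
  omega

def turanGraphInduceComplLastIso (n p : ℕ) :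
    (turanGraph (n + 1) p).induce {Fin.last n}ᶜ ≃g turanGraph n p where
  toFun x := x.1.castPred x.2
  invFun i := ⟨i.castSucc, by simp [Fin.castSucc_ne_last]⟩
  left_inv x := Subtype.ext (Fin.castSucc_castPred _ _)
  right_inv _ := Fin.castPred_castSucc
  map_rel_iff' := Iff.rfl

lemma turanEdges_succ (p n : ℕ) : turanEdges p (n + 1) = turanEdges p n + (n - n / p) := by
  classical
  have h := card_edgeFinset_induce_compl_singleton (turanGraph (n + 1) p) (Fin.last n)
  rw [card_edgeFinset_deleteIncidenceSet, degree_turanGraph_last,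
    (turanGraphInduceComplLastIso n p).card_edgeFinset_eq] at h
  have hle := (turanGraph (n + 1) p).degree_le_card_edgeFinset (Fin.last n)
  rw [degree_turanGraph_last] at hle
  unfold turanEdges
  omega

lemma one_sub_one_div_mul_le_sub_div (p n : ℕ) :
    (1 - 1 / (p : ℝ)) * n ≤ ((n - n / p : ℕ) : ℝ) := by
  rw [Nat.cast_sub (Nat.div_le_self n p)]
  have hdiv : ((n / p : ℕ) : ℝ) ≤ n / p := Nat.cast_div_le
  linarith [show (1 - 1 / (p : ℝ)) * n = n - n / p by ring]

lemma one_sub_one_div_mul_le_turanEdges_add_sub (p m k : ℕ) :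
    (1 - 1 / (p : ℝ)) * k * m ≤ (turanEdges p (m + k) : ℝ) - turanEdges p m := by
  induction k with
  | zero => simp
  | succ k ih =>
    have hstep := one_sub_one_div_mul_le_sub_div p (m + k)
    have hcoeff : 0 ≤ 1 - 1 / (p : ℝ) := by
      simpa [one_div] using Nat.cast_inv_le_one (α := ℝ) p
    rw [← add_assoc, turanEdges_succ, Nat.cast_add]
    push_cast at hstep ⊢
    linarith [mul_nonneg hcoeff (Nat.cast_nonneg (α := ℝ) k)]

theorem stmt_9_general (n k p : ℕ) (hkn : k < n) :
    (1 - 1 / (p : ℝ)) * k * ((n : ℝ) - k) ≤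
      (turanEdges p n : ℝ) - turanEdges p (n - k) := by
  obtain ⟨m, rfl⟩ : ∃ m, n = m + k := ⟨n - k, by omega⟩
  rw [Nat.add_sub_cancel, Nat.cast_add, add_sub_cancel_right]
  exact one_sub_one_div_mul_le_turanEdges_add_sub p m k

/-- For all integers `n > k ≥ 1` and `p ≥ 1`,
`t_p(n) − t_p(n−k) ≥ (1 − 1/p)·k·(n−k)`. -/
theorem stmt_9 (n k p : ℕ) (hk : 1 ≤ k) (hkn : k < n) (hp : 1 ≤ p) :
    (1 - 1 / (p : ℝ)) * k * ((n : ℝ) - k) ≤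
      (turanEdges p n : ℝ) - turanEdges p (n - k) :=
  stmt_9_general n k p hkn
end

section
/- Define u_4(n) = ⌊n²/4⌋ + n if 8 ∣ n or 10 ∣ n, and ⌊n²/4⌋ + n − 1 otherwise. Then for all integers n > k ≥ 1 with n − k ≥ 5, u_4(n) − u_4(n−k) ≥ (1/2)·k·(n−k). -/
/-- `u₄(n) = ⌊n²/4⌋ + n` if `8 ∣ n` or `10 ∣ n`, and `⌊n²/4⌋ + n − 1`
otherwise. -/
def u4 (n : ℕ) : ℕ := if 8 ∣ n ∨ 10 ∣ n then n ^ 2 / 4 + n else n ^ 2 / 4 + n - 1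

lemma sq_mod_four (n : ℕ) : n ^ 2 % 4 ≤ 1 := by
  conv_lhs => rw [Nat.pow_mod]
  have h : n % 4 < 4 := Nat.mod_lt _ (by norm_num)
  interval_cases (n % 4) <;> decide

lemma u4_lb (n : ℕ) : n ^ 2 / 4 + n - 1 ≤ u4 n := by
  unfold u4; split <;> omega

lemma u4_ub (n : ℕ) : u4 n ≤ n ^ 2 / 4 + n := by
  unfold u4; split <;> omega

/-- For all integers `n > k ≥ 1` with `n − k ≥ 5`,
`u₄(n) − u₄(n−k) ≥ (1/2)·k·(n−k)`. -/
theorem stmt_17 (n k : ℕ) (hk : 1 ≤ k) (hkn : k < n) (h5 : 5 ≤ n - k) :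
    (1 / 2 : ℝ) * k * ((n : ℝ) - k) ≤ (u4 n : ℝ) - u4 (n - k) := by
  set m := n - k with hm
  have hnm : n = m + k := by omega
  have h1 := u4_lb n
  have h2 := u4_ub m
  have h3 := sq_mod_four n
  have h4 := Nat.div_add_mod (n ^ 2) 4
  have h5' := Nat.div_add_mod (m ^ 2) 4
  -- key nat facts
  have hA : n ^ 2 ≤ 4 * (n ^ 2 / 4) + 1 := by omega
  have hB : 4 * (m ^ 2 / 4) ≤ m ^ 2 := by omega
  have hu1 : (n ^ 2 / 4 + n - 1 : ℕ) = n ^ 2 / 4 + n - 1 := rfl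
  -- cast to ℝ
  have c1 : ((n ^ 2 / 4 : ℕ) : ℝ) + n - 1 ≤ (u4 n : ℝ) := by
    have : ((n ^ 2 / 4 + n - 1 : ℕ) : ℝ) ≤ (u4 n : ℝ) := by exact_mod_cast h1
    have hge : 1 ≤ n ^ 2 / 4 + n := by omega
    push_cast [Nat.cast_sub hge] at this ⊢
    linarith
  have c2 : (u4 m : ℝ) ≤ ((m ^ 2 / 4 : ℕ) : ℝ) + m := by exact_mod_cast h2
  have cA : ((n : ℝ)) ^ 2 ≤ 4 * ((n ^ 2 / 4 : ℕ) : ℝ) + 1 := by exact_mod_cast hA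
  have cB : 4 * ((m ^ 2 / 4 : ℕ) : ℝ) ≤ ((m : ℝ)) ^ 2 := by exact_mod_cast hB
  have cn : (n : ℝ) = (m : ℝ) + k := by exact_mod_cast hnm
  have hk' : (1 : ℝ) ≤ k := by exact_mod_cast hk
  nlinarith [sq_nonneg ((k : ℝ) - 1), sq_nonneg (k : ℝ)]
end
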